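/- arXiv:2512.10217 — 6 statements merged into one kernel-verified Lean document; each statement's English description precedes it below -/
import Mathlib

section
/- Shearer's validity criterion (easy direction): let V be a finite set of variables, k a positive integer, and Z_1,...,Z_m ⊆ V such that every element of V belongs to at least k of the sets Z_i. Then for every polymatroid h on V, k·h(V) ≤ ∑_{i=1}^m h(Z_i). -/
/-!
Induct on a set `U`, proving `k • h U ≤ ∑ i, h (Z i ∩ U)`. Adding `a ∉ U` raises the left side by
`k` times the marginal gain `h (U ∪ {a}) - h U ≥ 0`, while for each of the at least `k` indices with
`a ∈ Z i` the term `h (Z i ∩ U)` grows by the marginal gain of `a` over `Z i ∩ U ⊆ U`, which by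
submodularity is at least as large. At `U = V` this is the claim.
-/

open Finset

section Shearer

variable {V ι β : Type*} [DecidableEq V] [AddCommGroup β] [PartialOrder β] [IsOrderedAddMonoid β]
  {h : Finset V → β}

theorem marginal_antitone_of_submodular (hsub : ∀ S T, h (S ∪ T) + h (S ∩ T) ≤ h S + h T)
    {a : V} {A B : Finset V} (hAB : A ⊆ B) (ha : a ∉ B) :
    h (insert a B) - h B ≤ h (insert a A) - h A := by
  have hunion : insert a A ∪ B = insert a B := by rw [insert_union, union_eq_right.2 hAB]
  have hinter : insert a A ∩ B = A := by
    rw [insert_inter_of_notMem ha, inter_eq_left.2 hAB]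
  rw [sub_le_sub_iff]
  simpa only [hunion, hinter, add_comm] using hsub (insert a A) B

omit [PartialOrder β] [IsOrderedAddMonoid β] in
theorem sum_apply_inter_insert (s : Finset ι) (Z : ι → Finset V) (a : V) (U : Finset V) :
    ∑ i ∈ s, h (Z i ∩ insert a U) =
      ∑ i ∈ s, h (Z i ∩ U) + ∑ i ∈ s with a ∈ Z i, (h (insert a (Z i ∩ U)) - h (Z i ∩ U)) := by
  rw [sum_filter, ← sum_add_distrib]
  refine sum_congr rfl fun i _ => ?_
  by_cases ha : a ∈ Z i
  · rw [if_pos ha, inter_insert_of_mem ha, add_sub_cancel]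
  · rw [if_neg ha, inter_insert_of_notMem ha, add_zero]

theorem nsmul_le_sum_apply_inter (h0 : h ∅ = 0) (hmono : ∀ S T, S ⊆ T → h S ≤ h T)
    (hsub : ∀ S T, h (S ∪ T) + h (S ∩ T) ≤ h S + h T) (s : Finset ι) (Z : ι → Finset V) (k : ℕ)
    (U : Finset V) (hcover : ∀ v ∈ U, k ≤ #{i ∈ s | v ∈ Z i}) :
    k • h U ≤ ∑ i ∈ s, h (Z i ∩ U) := by
  induction U using Finset.induction_on with
  | empty => simp only [inter_empty, h0, smul_zero, sum_const_zero, le_refl]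
  | insert a U ha ih =>
    have hgain : k • (h (insert a U) - h U) ≤
        ∑ i ∈ s with a ∈ Z i, (h (insert a (Z i ∩ U)) - h (Z i ∩ U)) :=
      calc k • (h (insert a U) - h U)
          ≤ #{i ∈ s | a ∈ Z i} • (h (insert a U) - h U) :=
            nsmul_le_nsmul_left (sub_nonneg.2 (hmono _ _ (subset_insert a U)))
              (hcover a (mem_insert_self a U))
        _ ≤ _ := card_nsmul_le_sum _ _ _ fun i _ =>
            marginal_antitone_of_submodular hsub inter_subset_right ha
    calc k • h (insert a U) = k • h U + k • (h (insert a U) - h U) := by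
          rw [← nsmul_add, add_sub_cancel]
      _ ≤ ∑ i ∈ s, h (Z i ∩ insert a U) := by
          rw [sum_apply_inter_insert]
          exact add_le_add (ih fun v hv => hcover v (mem_insert_of_mem hv)) hgain

end Shearer

theorem shearer_easy_general {V : Type*} [Fintype V] [DecidableEq V]
    (h : Finset V → ℝ)
    (h0 : h ∅ = 0)
    (hmono : ∀ S T, S ⊆ T → h S ≤ h T)
    (hsub : ∀ S T, h (S ∪ T) + h (S ∩ T) ≤ h S + h T)
    (k m : ℕ) (Z : Fin m → Finset V)
    (hcover : ∀ v : V, k ≤ (Finset.univ.filter fun i => v ∈ Z i).card) :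
    (k : ℝ) * h Finset.univ ≤ ∑ i, h (Z i) := by
  simpa only [nsmul_eq_mul, inter_univ] using
    nsmul_le_sum_apply_inter h0 hmono hsub univ Z k univ fun v _ => hcover v

/-- Shearer's validity criterion (easy direction): if every element of `V` belongs
to at least `k` of the sets `Z i`, then `k·h(V) ≤ ∑ i, h(Z i)` for every polymatroid `h`. -/
theorem shearer_easy {V : Type*} [Fintype V] [DecidableEq V]
    (h : Finset V → ℝ)
    (h0 : h ∅ = 0) (hnn : ∀ S, 0 ≤ h S)
    (hmono : ∀ S T, S ⊆ T → h S ≤ h T)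
    (hsub : ∀ S T, h (S ∪ T) + h (S ∩ T) ≤ h S + h T)
    (k m : ℕ) (hk : 0 < k) (Z : Fin m → Finset V)
    (hcover : ∀ v : V, k ≤ (Finset.univ.filter fun i => v ∈ Z i).card) :
    (k : ℝ) * h Finset.univ ≤ ∑ i, h (Z i) :=
  shearer_easy_general h h0 hmono hsub k m Z hcover
end

section
/- For any finite relations R ⊆ Dom^{A}×Dom^{B}, S ⊆ Dom^{B}×Dom^{C}, T ⊆ Dom^{C}×Dom^{D}, each of size at most N, there exist relations U ⊆ Dom^{A}×Dom^{B}×Dom^{C} and V ⊆ Dom^{B}×Dom^{C}×Dom^{D}, each of size at most N^{3/2}, such that for every tuple (a,b,c,d) with (a,b)∈R, (b,c)∈S, (c,d)∈T, either (a,b,c) ∈ U or (b,c,d) ∈ V. -/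
/-!
Split `S` by the out-degree of its first coordinate at the threshold `√N`. A tuple whose `b` is
light goes to `U`: each `(a, b) ∈ R` extends to at most `√N` triples, so `|U| ≤ N √N`. A tuple
whose `b` is heavy goes to `V`: the heavy degrees add up to at most `|S| ≤ N`, so there are at
most `√N` heavy values of `b`, and `|V| ≤ √N · |T| ≤ N √N`.
-/

open Finset

namespace PathRule

variable {α β γ δ : Type*} [DecidableEq β]

def degree (S : Finset (β × γ)) (b : β) : ℕ := #{p ∈ S | p.1 = b}

def neighbors [DecidableEq γ] (S : Finset (β × γ)) (b : β) : Finset γ :=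
  {p ∈ S | p.1 = b}.image Prod.snd

noncomputable section

def heavyKeys (S : Finset (β × γ)) (t : ℝ) : Finset β :=
  {b ∈ S.image Prod.fst | t < degree S b}

def lightJoin [DecidableEq α] [DecidableEq γ] (R : Finset (α × β)) (S : Finset (β × γ)) (t : ℝ) :
    Finset (α × β × γ) :=
  {ab ∈ R | (degree S ab.2 : ℝ) ≤ t}.biUnion fun ab => {ab.1} ×ˢ {ab.2} ×ˢ neighbors S ab.2

end

theorem card_neighbors_le [DecidableEq γ] (S : Finset (β × γ)) (b : β) :
    #(neighbors S b) ≤ degree S b :=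
  card_image_le

theorem sum_degree_eq_card (S : Finset (β × γ)) :
    ∑ b ∈ S.image Prod.fst, degree S b = #S :=
  (card_eq_sum_card_image Prod.fst S).symm

theorem mul_card_heavyKeys_le (S : Finset (β × γ)) (t : ℝ) :
    t * #(heavyKeys S t) ≤ #S := by
  calc t * #(heavyKeys S t) = ∑ _b ∈ heavyKeys S t, t := by rw [sum_const, nsmul_eq_mul, mul_comm]
    _ ≤ ∑ b ∈ heavyKeys S t, (degree S b : ℝ) := sum_le_sum fun b hb => (mem_filter.1 hb).2.le
    _ ≤ ∑ b ∈ S.image Prod.fst, (degree S b : ℝ) :=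
      sum_le_sum_of_subset_of_nonneg (filter_subset _ _) fun _ _ _ => Nat.cast_nonneg _
    _ = #S := mod_cast sum_degree_eq_card S

theorem card_lightJoin_le [DecidableEq α] [DecidableEq γ] (R : Finset (α × β))
    (S : Finset (β × γ)) {t : ℝ} (ht : 0 ≤ t) : (#(lightJoin R S t) : ℝ) ≤ #R * t := by
  calc (#(lightJoin R S t) : ℝ)
      ≤ ∑ ab ∈ R with (degree S ab.2 : ℝ) ≤ t, (#(neighbors S ab.2) : ℝ) := by
        refine (Nat.cast_le.2 card_biUnion_le).trans_eq ?_
        simp only [card_product, card_singleton, one_mul, Nat.cast_sum]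
    _ ≤ ∑ ab ∈ R with (degree S ab.2 : ℝ) ≤ t, t :=
        sum_le_sum fun ab hab =>
          (Nat.cast_le.2 (card_neighbors_le S ab.2)).trans (mem_filter.1 hab).2
    _ ≤ #R * t := by
        rw [sum_const, nsmul_eq_mul]
        exact mul_le_mul_of_nonneg_right (mod_cast card_filter_le _ _) ht

theorem mem_lightJoin_or_mem_heavyKeys_product [DecidableEq α] [DecidableEq γ]
    {R : Finset (α × β)} {S : Finset (β × γ)} {T : Finset (γ × δ)} (t : ℝ) {a : α} {b : β}
    {c : γ} {d : δ} (hab : (a, b) ∈ R) (hbc : (b, c) ∈ S) (hcd : (c, d) ∈ T) :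
    (a, b, c) ∈ lightJoin R S t ∨ (b, c, d) ∈ heavyKeys S t ×ˢ T := by
  rcases le_or_gt (degree S b : ℝ) t with hlight | hheavy
  · refine .inl (mem_biUnion.2 ⟨(a, b), mem_filter.2 ⟨hab, hlight⟩, ?_⟩)
    exact mem_product.2 ⟨mem_singleton_self a, mem_product.2
      ⟨mem_singleton_self b, mem_image_of_mem Prod.snd (mem_filter.2 ⟨hbc, rfl⟩)⟩⟩
  · exact .inr (mem_product.2 ⟨mem_filter.2 ⟨mem_image_of_mem _ hbc, hheavy⟩, hcd⟩)

end PathRule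

theorem Real.rpow_three_halves {x : ℝ} (hx : 0 ≤ x) : x ^ ((3 : ℝ) / 2) = x * √x := by
  rw [show (3 : ℝ) / 2 = 1 + 1 / 2 by norm_num, Real.rpow_add' hx (by norm_num), Real.rpow_one,
    Real.sqrt_eq_rpow]

open PathRule

theorem ddr_path_model_general {Dom : Type*} [DecidableEq Dom]
    (N : ℕ) (hN : 0 < N)
    (R : Finset (Dom × Dom)) (S : Finset (Dom × Dom)) (T : Finset (Dom × Dom))
    (hR : R.card ≤ N) (hS : S.card ≤ N) (hT : T.card ≤ N) :
    ∃ (U : Finset (Dom × Dom × Dom)) (V : Finset (Dom × Dom × Dom)),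
      (U.card : ℝ) ≤ (N : ℝ) ^ ((3 : ℝ) / 2) ∧
      (V.card : ℝ) ≤ (N : ℝ) ^ ((3 : ℝ) / 2) ∧
      ∀ a b c d : Dom, (a, b) ∈ R → (b, c) ∈ S → (c, d) ∈ T →
        (a, b, c) ∈ U ∨ (b, c, d) ∈ V := by
  set t := √(N : ℝ)
  have ht : 0 < t := Real.sqrt_pos.2 (mod_cast hN)
  have hN32 : (N : ℝ) ^ ((3 : ℝ) / 2) = N * t := Real.rpow_three_halves N.cast_nonneg
  have hheavy : (#(heavyKeys S t) : ℝ) ≤ t := by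
    refine le_of_mul_le_mul_left ?_ ht
    calc t * #(heavyKeys S t) ≤ #S := mul_card_heavyKeys_le S t
      _ ≤ N := mod_cast hS
      _ = t * t := (Real.mul_self_sqrt N.cast_nonneg).symm
  refine ⟨lightJoin R S t, heavyKeys S t ×ˢ T, ?_, ?_,
    fun a b c d => mem_lightJoin_or_mem_heavyKeys_product t⟩
  · rw [hN32]
    exact (card_lightJoin_le R S ht.le).trans
      (mul_le_mul_of_nonneg_right (mod_cast hR) ht.le)
  · rw [hN32, card_product, Nat.cast_mul, mul_comm (N : ℝ)]
    exact mul_le_mul hheavy (mod_cast hT) (Nat.cast_nonneg _) ht.le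

/-- Worst-case output size for the DDR `U(A,B,C) ∨ V(B,C,D) :- R(A,B) ∧ S(B,C) ∧ T(C,D)`:
given relations of size at most `N`, there is a model with both targets of size
at most `N^{3/2}`. -/
theorem ddr_path_model {Dom : Type*} [Fintype Dom] [DecidableEq Dom]
    (N : ℕ) (hN : 0 < N)
    (R : Finset (Dom × Dom)) (S : Finset (Dom × Dom)) (T : Finset (Dom × Dom))
    (hR : R.card ≤ N) (hS : S.card ≤ N) (hT : T.card ≤ N) :
    ∃ (U : Finset (Dom × Dom × Dom)) (V : Finset (Dom × Dom × Dom)),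
      (U.card : ℝ) ≤ (N : ℝ) ^ ((3 : ℝ) / 2) ∧
      (V.card : ℝ) ≤ (N : ℝ) ^ ((3 : ℝ) / 2) ∧
      ∀ a b c d : Dom, (a, b) ∈ R → (b, c) ∈ S → (c, d) ∈ T →
        (a, b, c) ∈ U ∨ (b, c, d) ∈ V :=
  ddr_path_model_general N hN R S T hR hS hT
end

section
/- For finite relations R ⊆ Dom^3 (on variables A,B,C), S (on C,D,E), T (on E,F,A), K (on B,D,F), each of size at most N, the hexagon join Q = {(a,b,c,d,e,f) : (a,b,c)∈R, (c,d,e)∈S, (e,f,a)∈T, (b,d,f)∈K} has size |Q| ≤ N². -/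
/-!
With `R_b`, `S_d`, `T_f` the slices of the relations at their middle coordinate, the join size is
`∑_{(b,d,f) ∈ K} tr(R_b S_d T_f)`, so Cauchy–Schwarz gives `|Q|² ≤ |K| · ∑_{b,d,f} tr(R_b S_d T_f)²`.
As `tr(X)² = tr(X ⊗ X)` and the Kronecker product is multiplicative, that sum is `tr(P_R P_S P_T)`,
where `P_R = ∑_b R_b ⊗ R_b` counts the common middle elements `b` of `(a,b,c), (a',b,c') ∈ R`.
By Cauchy–Schwarz for the trace, `tr(P_R P_S P_T)² ≤ ‖P_R‖² ‖P_S‖² ‖P_T‖²` (Frobenius norms), and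
`‖P_R‖ ≤ |R|` since `P_R((a,a'),(c,c'))` is at most both the number of `b` with `(a,b,c) ∈ R` and
the number with `(a',b,c') ∈ R`. Everything goes through for `[0,1]`-valued weights in place of
indicators.
-/

open Finset Matrix
open scoped Kronecker

namespace Matrix

variable {R l m n : Type*} [Fintype l] [Fintype m] [Fintype n]

def sumSq [Semiring R] (M : Matrix m n R) : R := ∑ i, ∑ j, M i j ^ 2

variable [CommSemiring R] [LinearOrder R] [IsStrictOrderedRing R] [ExistsAddOfLE R]

theorem sumSq_nonneg (M : Matrix m n R) : 0 ≤ sumSq M :=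
  sum_nonneg fun _ _ => sum_nonneg fun _ _ => sq_nonneg _

theorem sumSq_mul_le (M : Matrix l m R) (N : Matrix m n R) :
    sumSq (M * N) ≤ sumSq M * sumSq N :=
  calc sumSq (M * N) ≤ ∑ i, ∑ k, (∑ j, M i j ^ 2) * ∑ j, N j k ^ 2 := by
        unfold sumSq
        gcongr with i _ k
        simpa only [mul_apply] using sum_mul_sq_le_sq_mul_sq univ (M i ·) (N · k)
    _ = sumSq M * sumSq N := by
        rw [sumSq, sumSq, sum_comm (s := univ (α := m)), sum_mul_sum]

theorem trace_mul_sq_le (M : Matrix m n R) (N : Matrix n m R) :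
    trace (M * N) ^ 2 ≤ sumSq M * sumSq N := by
  have h := sum_mul_sq_le_sq_mul_sq univ (fun p : m × n => M p.1 p.2) (fun p => N p.2 p.1)
  simp only [Fintype.sum_prod_type] at h
  rwa [sumSq, sumSq, sum_comm (s := univ (α := n))]

theorem trace_mul_mul_sq_le (M : Matrix l m R) (N : Matrix m n R) (P : Matrix n l R) :
    trace (M * N * P) ^ 2 ≤ sumSq M * sumSq N * sumSq P :=
  (trace_mul_sq_le _ _).trans (mul_le_mul_of_nonneg_right (sumSq_mul_le M N) (sumSq_nonneg P))

end Matrix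

theorem sq_sum_mul_le_sum_mul_sum {R ι : Type*} [CommSemiring R] [PartialOrder R]
    [IsOrderedRing R] (s : Finset ι) {u v : ι → R} (hu : 0 ≤ u) (hu' : u ≤ 1) (hv : 0 ≤ v)
    (hv' : v ≤ 1) : (∑ i ∈ s, u i * v i) ^ 2 ≤ (∑ i ∈ s, u i) * ∑ i ∈ s, v i := by
  rw [sq]
  exact mul_le_mul (sum_le_sum fun i _ => mul_le_of_le_one_right (hu i) (hv' i))
    (sum_le_sum fun i _ => mul_le_of_le_one_left (hv i) (hu' i))
    (sum_nonneg fun i _ => mul_nonneg (hu i) (hv i)) (sum_nonneg fun i _ => hu i)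

section JoinBound

variable {R A B C D E F : Type*}

theorem sum3_nonneg [AddCommMonoid R] [PartialOrder R] [IsOrderedAddMonoid R] [Fintype A]
    [Fintype B] [Fintype C] {r : A → B → C → R} (hr : 0 ≤ r) : 0 ≤ ∑ a, ∑ b, ∑ c, r a b c :=
  Fintype.sum_nonneg fun a => Fintype.sum_nonneg fun b => Fintype.sum_nonneg (hr a b)

def midSlice (r : A → B → C → R) (b : B) : Matrix A C R := of fun a c => r a b c

section Codegree

variable [Fintype B] [CommSemiring R]

def codegreeMatrix (r : A → B → C → R) : Matrix (A × A) (C × C) R :=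
  ∑ b, midSlice r b ⊗ₖ midSlice r b

theorem codegreeMatrix_apply (r : A → B → C → R) (a a' : A) (c c' : C) :
    codegreeMatrix r (a, a') (c, c') = ∑ b, r a b c * r a' b c' := by
  simp [codegreeMatrix, midSlice, Matrix.sum_apply]

variable [Fintype A] [Fintype C] [LinearOrder R] [IsStrictOrderedRing R]

theorem sumSq_codegreeMatrix_le {r : A → B → C → R} (hr : 0 ≤ r) (hr' : r ≤ 1) :
    sumSq (codegreeMatrix r) ≤ (∑ a, ∑ b, ∑ c, r a b c) ^ 2 :=
  calc sumSq (codegreeMatrix r)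
      = ∑ x : A × A, ∑ y : C × C, (∑ b, r x.1 b y.1 * r x.2 b y.2) ^ 2 := by
        simp only [sumSq, ← codegreeMatrix_apply]
    _ ≤ ∑ x : A × A, ∑ y : C × C, (∑ b, r x.1 b y.1) * ∑ b, r x.2 b y.2 := by
        gcongr with x _ y
        exact sq_sum_mul_le_sum_mul_sum _ (fun b => hr _ b _) (fun b => hr' _ b _)
          (fun b => hr _ b _) (fun b => hr' _ b _)
    _ = (∑ a, ∑ b, ∑ c, r a b c) ^ 2 := by
        rw [sq, sum_mul_sum]
        simp only [Fintype.sum_prod_type]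
        refine sum_congr rfl fun a _ => sum_congr rfl fun a' _ => ?_
        rw [sum_comm (s := univ (α := B)), sum_comm (s := univ (α := B)), sum_mul_sum]

end Codegree

section Hexagon

variable [Fintype A] [Fintype B] [Fintype C] [Fintype D] [Fintype E] [Fintype F]

theorem sum_hexagon_eq_sum_mul_trace [CommSemiring R] (r : A → B → C → R)
    (s : C → D → E → R) (t : E → F → A → R) (k : B → D → F → R) :
    ∑ a, ∑ b, ∑ c, ∑ d, ∑ e, ∑ f, r a b c * s c d e * t e f a * k b d f =
      ∑ b, ∑ d, ∑ f, k b d f * trace (midSlice r b * midSlice s d * midSlice t f) := by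
  -- each `sum_comm` moves one summation outwards, sorting both sides into the order b d f a e c
  simp only [trace, Matrix.diag, mul_apply, midSlice, of_apply, mul_sum, sum_mul,
    sum_comm (s := univ (α := A)) (t := univ (α := B)),
    sum_comm (s := univ (α := A)) (t := univ (α := D)),
    sum_comm (s := univ (α := C)) (t := univ (α := D)),
    sum_comm (s := univ (α := A)) (t := univ (α := F)),
    sum_comm (s := univ (α := C)) (t := univ (α := F)),
    sum_comm (s := univ (α := E)) (t := univ (α := F)),
    sum_comm (s := univ (α := C)) (t := univ (α := E))]
  refine sum_congr rfl fun _ _ => sum_congr rfl fun _ _ => sum_congr rfl fun _ _ =>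
    sum_congr rfl fun _ _ => sum_congr rfl fun _ _ => sum_congr rfl fun _ _ => by ring

theorem sum_sq_trace_eq_trace_codegreeMatrix [CommSemiring R] (r : A → B → C → R)
    (s : C → D → E → R) (t : E → F → A → R) :
    ∑ b, ∑ d, ∑ f, trace (midSlice r b * midSlice s d * midSlice t f) ^ 2 =
      trace (codegreeMatrix r * codegreeMatrix s * codegreeMatrix t) := by
  simp only [sq, ← trace_kronecker, mul_kronecker_mul, codegreeMatrix, Matrix.sum_mul,
    Matrix.mul_sum, trace_sum, sum_comm (s := univ (α := D)) (t := univ (α := B)),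
    sum_comm (s := univ (α := F)) (t := univ (α := B)),
    sum_comm (s := univ (α := F)) (t := univ (α := D))]

variable [CommSemiring R] [LinearOrder R] [IsStrictOrderedRing R] [ExistsAddOfLE R]

theorem sum_sq_trace_le {r : A → B → C → R} {s : C → D → E → R} {t : E → F → A → R}
    (hr : 0 ≤ r) (hr' : r ≤ 1) (hs : 0 ≤ s) (hs' : s ≤ 1) (ht : 0 ≤ t) (ht' : t ≤ 1) :
    ∑ b, ∑ d, ∑ f, trace (midSlice r b * midSlice s d * midSlice t f) ^ 2 ≤
      (∑ a, ∑ b, ∑ c, r a b c) * (∑ c, ∑ d, ∑ e, s c d e) * ∑ e, ∑ f, ∑ a, t e f a := by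
  refine le_of_pow_le_pow_left₀ two_ne_zero
    (mul_nonneg (mul_nonneg (sum3_nonneg hr) (sum3_nonneg hs)) (sum3_nonneg ht)) ?_
  rw [sum_sq_trace_eq_trace_codegreeMatrix, mul_pow, mul_pow]
  refine (trace_mul_mul_sq_le _ _ _).trans ?_
  exact mul_le_mul (mul_le_mul (sumSq_codegreeMatrix_le hr hr') (sumSq_codegreeMatrix_le hs hs')
    (sumSq_nonneg _) (sq_nonneg _)) (sumSq_codegreeMatrix_le ht ht') (sumSq_nonneg _)
    (mul_nonneg (sq_nonneg _) (sq_nonneg _))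

theorem sq_sum_hexagon_le {r : A → B → C → R} {s : C → D → E → R} {t : E → F → A → R}
    {k : B → D → F → R} (hr : 0 ≤ r) (hr' : r ≤ 1) (hs : 0 ≤ s) (hs' : s ≤ 1) (ht : 0 ≤ t)
    (ht' : t ≤ 1) (hk : 0 ≤ k) (hk' : k ≤ 1) :
    (∑ a, ∑ b, ∑ c, ∑ d, ∑ e, ∑ f, r a b c * s c d e * t e f a * k b d f) ^ 2 ≤
      (∑ a, ∑ b, ∑ c, r a b c) * (∑ c, ∑ d, ∑ e, s c d e) * (∑ e, ∑ f, ∑ a, t e f a) *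
        ∑ b, ∑ d, ∑ f, k b d f := by
  rw [sum_hexagon_eq_sum_mul_trace]
  set M := fun b d f => trace (midSlice r b * midSlice s d * midSlice t f)
  have cauchy_schwarz : (∑ b, ∑ d, ∑ f, k b d f * M b d f) ^ 2 ≤
      (∑ b, ∑ d, ∑ f, k b d f ^ 2) * ∑ b, ∑ d, ∑ f, M b d f ^ 2 := by
    simpa only [Fintype.sum_prod_type] using sum_mul_sq_le_sq_mul_sq univ
      (fun p : B × D × F => k p.1 p.2.1 p.2.2) (fun p => M p.1 p.2.1 p.2.2)
  have sum_sq_le_sum : ∑ b, ∑ d, ∑ f, k b d f ^ 2 ≤ ∑ b, ∑ d, ∑ f, k b d f := by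
    gcongr with b _ d _ f _
    exact pow_le_of_le_one (hk b d f) (hk' b d f) two_ne_zero
  calc _ ≤ _ := cauchy_schwarz
    _ ≤ (∑ b, ∑ d, ∑ f, k b d f) *
          ((∑ a, ∑ b, ∑ c, r a b c) * (∑ c, ∑ d, ∑ e, s c d e) * ∑ e, ∑ f, ∑ a, t e f a) :=
        mul_le_mul sum_sq_le_sum (sum_sq_trace_le hr hr' hs hs' ht ht')
          (sum3_nonneg fun _ _ _ => sq_nonneg _) (sum3_nonneg hk)
    _ = _ := mul_comm _ _

end Hexagon

section Relations

variable [DecidableEq A] [DecidableEq B] [DecidableEq C]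

def relIndicator (X : Finset (A × B × C)) (a : A) (b : B) (c : C) : ℕ :=
  if (a, b, c) ∈ X then 1 else 0

theorem relIndicator_le_one (X : Finset (A × B × C)) : relIndicator X ≤ 1 := fun a b c => by
  unfold relIndicator
  split <;> simp

theorem sum_relIndicator [Fintype A] [Fintype B] [Fintype C] (X : Finset (A × B × C)) :
    ∑ a, ∑ b, ∑ c, relIndicator X a b c = X.card :=
  calc ∑ a, ∑ b, ∑ c, relIndicator X a b c = ∑ p : A × B × C, if p ∈ X then 1 else 0 := by
        simp only [relIndicator, Fintype.sum_prod_type]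
    _ = X.card := by simp

variable [DecidableEq D] [DecidableEq E] [DecidableEq F]
  [Fintype A] [Fintype B] [Fintype C] [Fintype D] [Fintype E] [Fintype F]

theorem card_hexagon_join (R : Finset (A × B × C)) (S : Finset (C × D × E))
    (T : Finset (E × F × A)) (K : Finset (B × D × F)) :
    (univ.filter fun q : A × B × C × D × E × F =>
        (q.1, q.2.1, q.2.2.1) ∈ R ∧
        (q.2.2.1, q.2.2.2.1, q.2.2.2.2.1) ∈ S ∧
        (q.2.2.2.2.1, q.2.2.2.2.2, q.1) ∈ T ∧
        (q.2.1, q.2.2.2.1, q.2.2.2.2.2) ∈ K).card =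
      ∑ a, ∑ b, ∑ c, ∑ d, ∑ e, ∑ f, relIndicator R a b c * relIndicator S c d e *
        relIndicator T e f a * relIndicator K b d f := by
  rw [card_filter]
  simp only [Fintype.sum_prod_type, relIndicator, ite_zero_mul_ite_zero, mul_one, and_assoc]

end Relations

end JoinBound

/-- AGM bound for the hexagon query: the natural join of `R(A,B,C)`, `S(C,D,E)`,
`T(E,F,A)`, `K(B,D,F)`, each of size at most `N`, has at most `N²` tuples. -/
theorem hexagon_join_bound {Dom : Type*} [Fintype Dom] [DecidableEq Dom]
    (N : ℕ)
    (R S T K : Finset (Dom × Dom × Dom))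
    (hR : R.card ≤ N) (hS : S.card ≤ N) (hT : T.card ≤ N) (hK : K.card ≤ N) :
    (Finset.univ.filter fun q : Dom × Dom × Dom × Dom × Dom × Dom =>
        (q.1, q.2.1, q.2.2.1) ∈ R ∧
        (q.2.2.1, q.2.2.2.1, q.2.2.2.2.1) ∈ S ∧
        (q.2.2.2.2.1, q.2.2.2.2.2, q.1) ∈ T ∧
        (q.2.1, q.2.2.2.1, q.2.2.2.2.2) ∈ K).card ≤ N ^ 2 := by
  have h := sq_sum_hexagon_le zero_le (relIndicator_le_one R) zero_le (relIndicator_le_one S)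
    zero_le (relIndicator_le_one T) zero_le (relIndicator_le_one K)
  rw [← card_hexagon_join, sum_relIndicator, sum_relIndicator, sum_relIndicator,
    sum_relIndicator] at h
  refine (Nat.pow_le_pow_iff_left two_ne_zero).1 (h.trans ?_)
  calc R.card * S.card * T.card * K.card ≤ N * N * N * N := by gcongr
    _ = (N ^ 2) ^ 2 := by ring
end

section
/- Product of measures along the hexagon proof: for every tuple (a,b,c,d,e,f) in the hexagon join Q, the two measures p'(abcdef) = deg_K(BD|F=f)/(N²·deg_S(DE|C=c)) and p''(abcdef) = deg_S(DE|C=c)/(N²·deg_K(BD|F=f)) satisfy p'(abcdef) · p''(abcdef) = 1/N⁴, hence their geometric mean equals 1/N² on all of Q, and therefore |Q| ≤ N². -/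
/-!
Write `deg_S(c)` and `deg_K(f)` for the fiber sizes of `S` over `C = c` and of `K` over `F = f`.
On the hexagon join `Q`, the sum of `deg_K(f) / deg_S(c)` is at most `|R| |K|`: a tuple is
determined by its `R`-part, its `S`-part (one of `deg_S(c)` tuples over `c`, which the division
averages out) and `f`, whose weights `deg_K(f)` add up to `|K|`. Symmetrically, walking through
`T`, `K` and `R`, the sum of `deg_S(c) / deg_K(f)` is at most `|T| |S|`. Since `x + 1/x ≥ 2`,
adding the two bounds gives `2 |Q| ≤ 2 N²`: the geometric mean of the two measures, the uniform
weight `1/N²`, has total mass at most `1` on `Q`.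
-/

open Finset

section WeightedChain

variable {ι U V X : Type*}

theorem sum_comp_le_sum_univ_of_injOn [Fintype X] {Q : Finset ι} {x : ι → X}
    (hx : Set.InjOn x Q) {w : X → ℝ} (hw : ∀ t, 0 ≤ w t) :
    ∑ q ∈ Q, w (x q) ≤ ∑ t, w t := by
  classical
  rw [← sum_image hx]
  exact sum_le_univ_sum_of_nonneg hw

theorem sum_div_card_fiber_le [DecidableEq U] [DecidableEq V] [Fintype X]
    (Q : Finset ι) (u : ι → U) (v : ι → V) (x : ι → X)
    (hinj : Set.InjOn (fun q => (u q, v q, x q)) Q)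
    (R : Finset U) (hu : ∀ q ∈ Q, u q ∈ R)
    (F : U → Finset V) (hv : ∀ q ∈ Q, v q ∈ F (u q))
    (w : X → ℝ) (hw : ∀ t, 0 ≤ w t) :
    ∑ q ∈ Q, w (x q) / #(F (u q)) ≤ #R * ∑ t, w t := by
  have hfiber : ∀ r, ∑ q ∈ Q with u q = r, w (x q) ≤ #(F r) * ∑ t, w t := by
    intro r
    calc ∑ q ∈ Q with u q = r, w (x q)
        = ∑ s ∈ F r, ∑ q ∈ Q with u q = r ∧ v q = s, w (x q) := by
          rw [← sum_fiberwise_of_maps_to (t := F r) (g := v) (fun q hq => ?_)]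
          · simp only [filter_filter]
          obtain ⟨hqQ, rfl⟩ := mem_filter.1 hq
          exact hv q hqQ
      _ ≤ ∑ s ∈ F r, ∑ t, w t := by
          refine sum_le_sum fun s _ => sum_comp_le_sum_univ_of_injOn ?_ hw
          intro p hp q hq hpq
          simp only [coe_filter, Set.mem_ofPred_eq] at hp hq
          refine hinj hp.1 hq.1 ?_
          simp only [hp.2.1, hp.2.2, hq.2.1, hq.2.2, hpq]
      _ = #(F r) * ∑ t, w t := by rw [sum_const, nsmul_eq_mul]
  have hW : 0 ≤ ∑ t, w t := sum_nonneg fun t _ => hw t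
  calc ∑ q ∈ Q, w (x q) / #(F (u q))
      = ∑ r ∈ R, (∑ q ∈ Q with u q = r, w (x q)) / #(F r) := by
        rw [← sum_fiberwise_of_maps_to hu]
        refine sum_congr rfl fun r _ => ?_
        rw [sum_div]
        exact sum_congr rfl fun q hq => by rw [(mem_filter.1 hq).2]
    _ ≤ ∑ _r ∈ R, ∑ t, w t := by
        refine sum_le_sum fun r _ => div_le_of_le_mul₀ (by positivity) hW ?_
        rw [mul_comm]
        exact hfiber r
    _ = #R * ∑ t, w t := by rw [sum_const, nsmul_eq_mul]

end WeightedChain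

theorem sum_card_filter_eq_card {α β : Type*} [Fintype β] [DecidableEq β]
    (s : Finset α) (g : α → β) : ∑ b, (#{a ∈ s | g a = b} : ℝ) = #s := by
  rw [card_eq_sum_card_fiberwise fun a _ => mem_univ (g a), Nat.cast_sum]

theorem two_le_add_inv {x : ℝ} (hx : 0 < x) : 2 ≤ x + x⁻¹ := by
  have : x + x⁻¹ - 2 = (x - 1) ^ 2 / x := by field_simp; ring
  nlinarith [div_nonneg (sq_nonneg (x - 1)) hx.le]

theorem card_le_of_sum_le_of_sum_inv_le {ι : Type*} {s : Finset ι} {x : ι → ℝ}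
    (hx : ∀ i ∈ s, 0 < x i) {M : ℝ} (h : ∑ i ∈ s, x i ≤ M) (hinv : ∑ i ∈ s, (x i)⁻¹ ≤ M) :
    #s ≤ M := by
  have : ∑ _i ∈ s, (2 : ℝ) ≤ ∑ i ∈ s, (x i + (x i)⁻¹) :=
    sum_le_sum fun i hi => two_le_add_inv (hx i hi)
  rw [sum_const, nsmul_eq_mul, sum_add_distrib] at this
  linarith

theorem div_sq_mul_mul_div_sq_mul {a b n : ℝ} (ha : a ≠ 0) (hb : b ≠ 0) :
    a / (n ^ 2 * b) * (b / (n ^ 2 * a)) = 1 / n ^ 4 := by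
  rw [div_mul_div_comm, mul_mul_mul_comm, ← pow_add, mul_comm a b,
    div_mul_cancel_right₀ (mul_ne_zero hb ha), one_div]

section Hexagon

variable {α : Type*} [Fintype α] [DecidableEq α] (R S T K : Finset (α × α × α))

/-- Tuples `(a, b, c, d, e, f)` with `R(a,b,c)`, `S(c,d,e)`, `T(e,f,a)` and `K(b,d,f)`. -/
def hexagonJoin : Finset (α × α × α × α × α × α) :=
  univ.filter fun q =>
    (q.1, q.2.1, q.2.2.1) ∈ R ∧
    (q.2.2.1, q.2.2.2.1, q.2.2.2.2.1) ∈ S ∧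
    (q.2.2.2.2.1, q.2.2.2.2.2, q.1) ∈ T ∧
    (q.2.1, q.2.2.2.1, q.2.2.2.2.2) ∈ K

variable {R S T K}

theorem mem_hexagonJoin {q : α × α × α × α × α × α} :
    q ∈ hexagonJoin R S T K ↔
      (q.1, q.2.1, q.2.2.1) ∈ R ∧ (q.2.2.1, q.2.2.2.1, q.2.2.2.2.1) ∈ S ∧
      (q.2.2.2.2.1, q.2.2.2.2.2, q.1) ∈ T ∧ (q.2.1, q.2.2.2.1, q.2.2.2.2.2) ∈ K := by
  simp [hexagonJoin]

theorem card_fiber_S_pos {q : α × α × α × α × α × α} (hq : q ∈ hexagonJoin R S T K) :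
    (0 : ℝ) < #{t ∈ S | t.1 = q.2.2.1} :=
  Nat.cast_pos.2 (card_pos.2 ⟨_, mem_filter.2 ⟨(mem_hexagonJoin.1 hq).2.1, rfl⟩⟩)

theorem card_fiber_K_pos {q : α × α × α × α × α × α} (hq : q ∈ hexagonJoin R S T K) :
    (0 : ℝ) < #{t ∈ K | t.2.2 = q.2.2.2.2.2} :=
  Nat.cast_pos.2 (card_pos.2 ⟨_, mem_filter.2 ⟨(mem_hexagonJoin.1 hq).2.2.2, rfl⟩⟩)

theorem sum_card_fiber_K_div_card_fiber_S_le :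
    ∑ q ∈ hexagonJoin R S T K,
      (#{t ∈ K | t.2.2 = q.2.2.2.2.2} : ℝ) / #{t ∈ S | t.1 = q.2.2.1} ≤ #R * #K := by
  calc _ ≤ #R * ∑ f, (#{t ∈ K | t.2.2 = f} : ℝ) :=
        sum_div_card_fiber_le _ (fun q => (q.1, q.2.1, q.2.2.1))
          (fun q => (q.2.2.1, q.2.2.2.1, q.2.2.2.2.1)) (fun q => q.2.2.2.2.2)
          (fun p _ q _ h => by simp only [Prod.mk.injEq] at h; ext <;> simp [h])
          R (fun q hq => (mem_hexagonJoin.1 hq).1)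
          (fun r => {t ∈ S | t.1 = r.2.2})
          (fun q hq => mem_filter.2 ⟨(mem_hexagonJoin.1 hq).2.1, rfl⟩)
          _ (fun _ => by positivity)
    _ = #R * #K := by rw [sum_card_filter_eq_card]

theorem sum_card_fiber_S_div_card_fiber_K_le :
    ∑ q ∈ hexagonJoin R S T K,
      (#{t ∈ S | t.1 = q.2.2.1} : ℝ) / #{t ∈ K | t.2.2 = q.2.2.2.2.2} ≤ #T * #S := by
  calc _ ≤ #T * ∑ c, (#{t ∈ S | t.1 = c} : ℝ) :=
        sum_div_card_fiber_le _ (fun q => (q.2.2.2.2.1, q.2.2.2.2.2, q.1))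
          (fun q => (q.2.1, q.2.2.2.1, q.2.2.2.2.2)) (fun q => q.2.2.1)
          (fun p _ q _ h => by simp only [Prod.mk.injEq] at h; ext <;> simp [h])
          T (fun q hq => (mem_hexagonJoin.1 hq).2.2.1)
          (fun r => {t ∈ K | t.2.2 = r.2.1})
          (fun q hq => mem_filter.2 ⟨(mem_hexagonJoin.1 hq).2.2.2, rfl⟩)
          _ (fun _ => by positivity)
    _ = #T * #S := by rw [sum_card_filter_eq_card]

theorem card_hexagonJoin_le {N : ℕ} (hR : #R ≤ N) (hS : #S ≤ N) (hT : #T ≤ N) (hK : #K ≤ N) :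
    #(hexagonJoin R S T K) ≤ N ^ 2 := by
  have hRK : (#R * #K : ℝ) ≤ (N ^ 2 : ℕ) := by push_cast; rw [sq]; gcongr
  have hTS : (#T * #S : ℝ) ≤ (N ^ 2 : ℕ) := by push_cast; rw [sq]; gcongr
  exact_mod_cast card_le_of_sum_le_of_sum_inv_le
    (fun q hq => div_pos (card_fiber_K_pos hq) (card_fiber_S_pos hq))
    (sum_card_fiber_K_div_card_fiber_S_le.trans hRK)
    (by simpa only [inv_div] using sum_card_fiber_S_div_card_fiber_K_le.trans hTS)

end Hexagon

theorem hexagon_measure_product_general {Dom : Type*} [Fintype Dom] [DecidableEq Dom]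
    (N : ℕ)
    (R S T K : Finset (Dom × Dom × Dom))
    (hR : R.card ≤ N) (hS : S.card ≤ N) (hT : T.card ≤ N) (hK : K.card ≤ N)
    (Q : Finset (Dom × Dom × Dom × Dom × Dom × Dom))
    (hQ : Q = Finset.univ.filter fun q =>
        (q.1, q.2.1, q.2.2.1) ∈ R ∧
        (q.2.2.1, q.2.2.2.1, q.2.2.2.2.1) ∈ S ∧
        (q.2.2.2.2.1, q.2.2.2.2.2, q.1) ∈ T ∧
        (q.2.1, q.2.2.2.1, q.2.2.2.2.2) ∈ K) :
    (∀ q ∈ Q,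
      let c := q.2.2.1
      let f := q.2.2.2.2.2
      let degS : ℝ := ((S.filter fun t => t.1 = c).card : ℝ)
      let degK : ℝ := ((K.filter fun t => t.2.2 = f).card : ℝ)
      (degK / ((N : ℝ) ^ 2 * degS)) * (degS / ((N : ℝ) ^ 2 * degK)) =
        1 / (N : ℝ) ^ 4 ∧
      Real.sqrt ((degK / ((N : ℝ) ^ 2 * degS)) * (degS / ((N : ℝ) ^ 2 * degK))) =
        1 / (N : ℝ) ^ 2) ∧
    Q.card ≤ N ^ 2 := by
  change Q = hexagonJoin R S T K at hQ
  subst hQ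
  refine ⟨fun q hq => ?_, card_hexagonJoin_le hR hS hT hK⟩
  have hprod := div_sq_mul_mul_div_sq_mul (n := (N : ℝ))
    (card_fiber_K_pos hq).ne' (card_fiber_S_pos hq).ne'
  refine ⟨hprod, ?_⟩
  rw [hprod, show (1 : ℝ) / N ^ 4 = (1 / N ^ 2) ^ 2 by ring, Real.sqrt_sq (by positivity)]

/-- Product of the two measures along the hexagon proof: on every tuple of the
hexagon join `Q`, `p' · p'' = 1/N⁴` (so their geometric mean is `1/N²` on `Q`),
and consequently `|Q| ≤ N²`. -/
theorem hexagon_measure_product {Dom : Type*} [Fintype Dom] [DecidableEq Dom]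
    (N : ℕ) (hN : 0 < N)
    (R S T K : Finset (Dom × Dom × Dom))
    (hR : R.card ≤ N) (hS : S.card ≤ N) (hT : T.card ≤ N) (hK : K.card ≤ N)
    (Q : Finset (Dom × Dom × Dom × Dom × Dom × Dom))
    (hQ : Q = Finset.univ.filter fun q =>
        (q.1, q.2.1, q.2.2.1) ∈ R ∧
        (q.2.2.1, q.2.2.2.1, q.2.2.2.2.1) ∈ S ∧
        (q.2.2.2.2.1, q.2.2.2.2.2, q.1) ∈ T ∧
        (q.2.1, q.2.2.2.1, q.2.2.2.2.2) ∈ K) :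
    (∀ q ∈ Q,
      let c := q.2.2.1
      let f := q.2.2.2.2.2
      let degS : ℝ := ((S.filter fun t => t.1 = c).card : ℝ)
      let degK : ℝ := ((K.filter fun t => t.2.2 = f).card : ℝ)
      (degK / ((N : ℝ) ^ 2 * degS)) * (degS / ((N : ℝ) ^ 2 * degK)) =
        1 / (N : ℝ) ^ 4 ∧
      Real.sqrt ((degK / ((N : ℝ) ^ 2 * degS)) * (degS / ((N : ℝ) ^ 2 * degK))) =
        1 / (N : ℝ) ^ 2) ∧
    Q.card ≤ N ^ 2 :=
  hexagon_measure_product_general N R S T K hR hS hT hK Q hQ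
end

section
/- For every polymatroid h on V = {A_1,...,A_6}, the inequality h(A_1A_2A_3A_4A_5) + h(A_3A_4A_5A_6A_1) + h(A_5A_6A_1A_2A_3) + h(A_2A_4A_6) ≤ h(A_1A_2A_3) + h(A_2A_3A_4) + h(A_3A_4A_5) + h(A_4A_5A_6) + h(A_5A_6A_1) + h(A_6A_1A_2) holds. -/
/-!
Each of the three five-element sets is the union of a chain of three small sets, so two
applications of submodularity bound it (with `h ∅ = 0` in the third):
`h(01234) + h(12) + h(23) ≤ h(012) + h(123) + h(234)`,
`h(23450) + h(3) + h(45) ≤ h(23) + h(345) + h(450)`,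
`h(45012) + h(15) ≤ h(12) + h(45) + h(501)`.
Together with `h(135) ≤ h(15) + h(3)` the correction terms `h(12), h(23), h(3), h(45), h(15)`
cancel and the six triples remain, each exactly once.
-/

section Submodular

variable {α β : Type*} [DecidableEq α]

theorem submodular_le [Add β] [LE β]
    {h : Finset α → β} (hsub : ∀ S T, h (S ∪ T) + h (S ∩ T) ≤ h S + h T)
    {S T U I : Finset α} (hU : S ∪ T = U) (hI : S ∩ T = I) :
    h U + h I ≤ h S + h T :=
  hU ▸ hI ▸ hsub S T

theorem submodular_chain_le [AddCommMonoid β] [PartialOrder β] [IsOrderedCancelAddMonoid β]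
    {h : Finset α → β} (hsub : ∀ S T, h (S ∪ T) + h (S ∩ T) ≤ h S + h T)
    {A B C U I J : Finset α} (hU : A ∪ B ∪ C = U) (hI : A ∩ B = I)
    (hJ : (A ∪ B) ∩ C = J) :
    h U + h I + h J ≤ h A + h B + h C := by
  subst hU hI hJ
  have hAB := hsub A B
  have hABC := hsub (A ∪ B) C
  refine le_of_add_le_add_left (a := h (A ∪ B)) ?_
  convert add_le_add hABC hAB using 1 <;> abel

end Submodular

theorem six_cycle_chain_ineq_general (h : Finset (Fin 6) → ℝ)
    (h0 : h ∅ = 0)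
    (hsub : ∀ S T, h (S ∪ T) + h (S ∩ T) ≤ h S + h T) :
    h {0, 1, 2, 3, 4} + h {2, 3, 4, 5, 0} + h {4, 5, 0, 1, 2} + h {1, 3, 5} ≤
      h {0, 1, 2} + h {1, 2, 3} + h {2, 3, 4} + h {3, 4, 5} + h {4, 5, 0} +
        h {5, 0, 1} := by
  have h01234 :
      h {0, 1, 2, 3, 4} + h {1, 2} + h {2, 3} ≤ h {0, 1, 2} + h {1, 2, 3} + h {2, 3, 4} :=
    submodular_chain_le hsub (by decide) (by decide) (by decide)
  have h23450 : h {2, 3, 4, 5, 0} + h {3} + h {4, 5} ≤ h {2, 3} + h {3, 4, 5} + h {4, 5, 0} :=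
    submodular_chain_le hsub (by decide) (by decide) (by decide)
  have h45012 : h {4, 5, 0, 1, 2} + h ∅ + h {1, 5} ≤ h {1, 2} + h {4, 5} + h {5, 0, 1} :=
    submodular_chain_le hsub (by decide) (by decide) (by decide)
  have h135 : h {1, 3, 5} + h ∅ ≤ h {1, 5} + h {3} :=
    submodular_le hsub (by decide) (by decide)
  linarith

/-- For every polymatroid `h` on `V = {A₁,...,A₆}` (here `Fin 6` with `Aᵢ = i-1`):
`h(A₁A₂A₃A₄A₅) + h(A₃A₄A₅A₆A₁) + h(A₅A₆A₁A₂A₃) + h(A₂A₄A₆)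
  ≤ h(A₁A₂A₃) + h(A₂A₃A₄) + h(A₃A₄A₅) + h(A₄A₅A₆) + h(A₅A₆A₁) + h(A₆A₁A₂)`. -/
theorem six_cycle_chain_ineq (h : Finset (Fin 6) → ℝ)
    (h0 : h ∅ = 0) (hnn : ∀ S, 0 ≤ h S)
    (hmono : ∀ S T, S ⊆ T → h S ≤ h T)
    (hsub : ∀ S T, h (S ∪ T) + h (S ∩ T) ≤ h S + h T) :
    h {0, 1, 2, 3, 4} + h {2, 3, 4, 5, 0} + h {4, 5, 0, 1, 2} + h {1, 3, 5} ≤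
      h {0, 1, 2} + h {1, 2, 3} + h {2, 3, 4} + h {3, 4, 5} + h {4, 5, 0} +
        h {5, 0, 1} :=
  six_cycle_chain_ineq_general h h0 hsub
end

section
/- For every polymatroid h on V = {A_1,A_2,A_3,A_4,B_1,B_2,B_3,B_4}, the inequality h(A_1A_2A_3A_4) + h(B_1B_2B_3B_4) + h(A_1A_3B_1B_3) + h(A_2B_2) + h(A_4B_4) ≤ h(A_1A_2) + h(A_2A_3) + h(A_3A_4) + h(A_4A_1) + h(B_1B_2) + h(B_2B_3) + h(B_3B_4) + h(B_4B_1) holds. -/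
/-!
In each square, submodularity glues two consecutive edges over their common vertex, on either side
of a diagonal, and then glues the two resulting triangles over that diagonal. This bounds the
square's vertex set, its diagonal and the two off-diagonal vertices by the four edges; the
diagonals `A₁A₃, B₁B₃` and the vertex pairs `A₂, B₂` and `A₄, B₄` then combine by subadditivity
on disjoint sets.
-/

section Submodular

variable {α : Type*} [DecidableEq α] {h : Finset α → ℝ}
  (hsub : ∀ S T, h (S ∪ T) + h (S ∩ T) ≤ h S + h T)
include hsub

theorem union_le_add_of_disjoint (h0 : h ∅ = 0) {s t : Finset α} (hst : Disjoint s t) :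
    h (s ∪ t) ≤ h s + h t := by
  simpa [Finset.disjoint_iff_inter_eq_empty.mp hst, h0] using hsub s t

theorem path_add_middle_le_edges {a b c : α} (hac : a ≠ c) :
    h {a, b, c} + h {b} ≤ h {a, b} + h {b, c} := by
  have hunion : ({a, b} ∪ {b, c} : Finset α) = {a, b, c} := by ext; simp
  have hinter : ({a, b} ∩ {b, c} : Finset α) = {b} := by ext; grind
  simpa [hunion, hinter] using hsub {a, b} {b, c}

theorem square_add_diagonal_le_edges {a b c d : α} (hac : a ≠ c) (hbd : b ≠ d) :
    h {a, b, c, d} + h {a, c} + h {b} + h {d} ≤ h {a, b} + h {b, c} + h {c, d} + h {d, a} := by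
  have habc := path_add_middle_le_edges hsub (b := b) hac
  have hcda := path_add_middle_le_edges hsub (b := d) hac.symm
  have hunion : ({a, b, c} ∪ {c, d, a} : Finset α) = {a, b, c, d} := by ext; grind
  have hinter : ({a, b, c} ∩ {c, d, a} : Finset α) = {a, c} := by ext; grind
  have hglue := hsub {a, b, c} {c, d, a}
  rw [hunion, hinter] at hglue
  linarith

end Submodular

/-- The vertices `A₁, A₂, A₃, A₄, B₁, B₂, B₃, B₄` are encoded as `0, …, 7 : Fin 8`. -/
theorem two_squares_ineq_general (h : Finset (Fin 8) → ℝ)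
    (h0 : h ∅ = 0)
    (hsub : ∀ S T, h (S ∪ T) + h (S ∩ T) ≤ h S + h T) :
    h {0, 1, 2, 3} + h {4, 5, 6, 7} + h {0, 2, 4, 6} + h {1, 5} + h {3, 7} ≤
      h {0, 1} + h {1, 2} + h {2, 3} + h {3, 0} + h {4, 5} + h {5, 6} + h {6, 7} +
        h {7, 4} := by
  have hsquareA :=
    square_add_diagonal_le_edges hsub (a := 0) (b := 1) (c := 2) (d := 3) (by decide) (by decide)
  have hsquareB :=
    square_add_diagonal_le_edges hsub (a := 4) (b := 5) (c := 6) (d := 7) (by decide) (by decide)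
  have hdiagonals : h {0, 2, 4, 6} ≤ h {0, 2} + h {4, 6} :=
    union_le_add_of_disjoint hsub h0 (s := {0, 2}) (t := {4, 6}) (by decide)
  have hA₂B₂ : h {1, 5} ≤ h {1} + h {5} :=
    union_le_add_of_disjoint hsub h0 (s := {1}) (t := {5}) (by decide)
  have hA₄B₄ : h {3, 7} ≤ h {3} + h {7} :=
    union_le_add_of_disjoint hsub h0 (s := {3}) (t := {7}) (by decide)
  linarith

/-- For every polymatroid `h` on `V = {A₁,A₂,A₃,A₄,B₁,B₂,B₃,B₄}` (here `Fin 8` with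
`A₁=0, A₂=1, A₃=2, A₄=3, B₁=4, B₂=5, B₃=6, B₄=7`):
`h(A₁A₂A₃A₄) + h(B₁B₂B₃B₄) + h(A₁A₃B₁B₃) + h(A₂B₂) + h(A₄B₄)
  ≤ h(A₁A₂) + h(A₂A₃) + h(A₃A₄) + h(A₄A₁) + h(B₁B₂) + h(B₂B₃) + h(B₃B₄) + h(B₄B₁)`. -/
theorem two_squares_ineq (h : Finset (Fin 8) → ℝ)
    (h0 : h ∅ = 0) (hnn : ∀ S, 0 ≤ h S)
    (hmono : ∀ S T, S ⊆ T → h S ≤ h T)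
    (hsub : ∀ S T, h (S ∪ T) + h (S ∩ T) ≤ h S + h T) :
    h {0, 1, 2, 3} + h {4, 5, 6, 7} + h {0, 2, 4, 6} + h {1, 5} + h {3, 7} ≤
      h {0, 1} + h {1, 2} + h {2, 3} + h {3, 0} + h {4, 5} + h {5, 6} + h {6, 7} +
        h {7, 4} :=
  two_squares_ineq_general h h0 hsub
end
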